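/- arXiv:2006.09269 — 4 statements merged into one kernel-verified Lean document; each statement's English description precedes it below -/
import Mathlib

section
/- Let d be a positive integer and let G be a d-degenerate graph on n vertices. If c ≥ 2d + 2, then the reconfiguration graph R_c(G) has diameter at most (d+1)·n; that is, any two c-colorings of G are joined in R_c(G) by a path of length at most (d+1)·n. -/
/-- A `k`-coloring of `G` is a proper coloring with colors in `Fin k`. -/
def ProperKColoring {V : Type*} (G : SimpleGraph V) (k : ℕ) :=
  {φ : V → Fin k // ∀ u v : V, G.Adj u v → φ u ≠ φ v}

/-- The reconfiguration graph `R_k(G)`: vertices are the proper `k`-colorings of `G`,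
two colorings being adjacent if they differ in the color of exactly one vertex. -/
def recolorGraph {V : Type*} (G : SimpleGraph V) (k : ℕ) :
    SimpleGraph (ProperKColoring G k) where
  Adj α β := ∃ x : V, α.1 x ≠ β.1 x ∧ ∀ y : V, y ≠ x → α.1 y = β.1 y
  symm := by
    constructor
    rintro α β ⟨x, hx, h⟩
    exact ⟨x, hx.symm, fun y hy => (h y hy).symm⟩
  loopless := by
    constructor
    rintro α ⟨x, hx, _⟩
    exact hx rfl

/-- A graph is `d`-degenerate if every subgraph contains a vertex of degree at most `d`;
equivalently, every nonempty set `S` of vertices contains a vertex with at most `d`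
neighbors inside `S`. -/
def Degenerate {V : Type*} [Fintype V] [DecidableEq V] (G : SimpleGraph V)
    [DecidableRel G.Adj] (d : ℕ) : Prop :=
  ∀ S : Finset V, S.Nonempty → ∃ v ∈ S, (S.filter (fun u => G.Adj v u)).card ≤ d

namespace BPAux

set_option linter.unusedSectionVars false

open Finset

variable {V : Type*} [Fintype V] [DecidableEq V] (G : SimpleGraph V) [DecidableRel G.Adj] {c : ℕ}

/-- Apply a list of recoloring moves in order. -/
def applyMoves (φ : V → Fin c) : List (V × Fin c) → (V → Fin c)
  | [] => φ
  | m :: L => applyMoves (Function.update φ m.1 m.2) L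

@[simp] lemma applyMoves_nil (φ : V → Fin c) : applyMoves φ ([] : List (V × Fin c)) = φ := rfl

@[simp] lemma applyMoves_cons (φ : V → Fin c) (m : V × Fin c) (L : List (V × Fin c)) :
    applyMoves φ (m :: L) = applyMoves (Function.update φ m.1 m.2) L := rfl

lemma applyMoves_append (φ : V → Fin c) (L₁ L₂ : List (V × Fin c)) :
    applyMoves φ (L₁ ++ L₂) = applyMoves (applyMoves φ L₁) L₂ := by
  induction L₁ generalizing φ with
  | nil => rfl
  | cons m L ih => simp [ih]

/-- Properness restricted to a finite set of vertices. -/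
def ProperOn (S : Finset V) (φ : V → Fin c) : Prop :=
  ∀ u ∈ S, ∀ w ∈ S, G.Adj u w → φ u ≠ φ w

lemma properOn_congr {S : Finset V} {φ ψ : V → Fin c} (h : ∀ x ∈ S, φ x = ψ x)
    (hP : ProperOn G S φ) : ProperOn G S ψ := by
  intro u hu w hw hadj
  rw [← h u hu, ← h w hw]
  exact hP u hu w hw hadj

lemma properOn_mono {S T : Finset V} {φ : V → Fin c} (h : T ⊆ S) (hP : ProperOn G S φ) :
    ProperOn G T φ := fun u hu w hw hadj => hP u (h hu) w (h hw) hadj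

/-- Validity of a sequence of moves starting from `φ`: all moves are inside `S` and
every intermediate coloring is proper on `S`. -/
def ValidOn (S : Finset V) : (V → Fin c) → List (V × Fin c) → Prop
  | _, [] => True
  | φ, m :: L => m.1 ∈ S ∧ ProperOn G S (Function.update φ m.1 m.2) ∧
      ValidOn S (Function.update φ m.1 m.2) L

lemma validOn_mem {S : Finset V} : ∀ {L : List (V × Fin c)} {φ : V → Fin c},
    ValidOn G S φ L → ∀ m ∈ L, m.1 ∈ S := by
  intro L
  induction L with
  | nil => intro φ _ m hm; simp at hm
  | cons m' L ih =>
    intro φ hV m hm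
    obtain ⟨h1, _, h3⟩ := hV
    rcases List.mem_cons.mp hm with rfl | hm
    · exact h1
    · exact ih h3 m hm

lemma validOn_congr {S : Finset V} : ∀ {L : List (V × Fin c)} {φ ψ : V → Fin c},
    (∀ x ∈ S, φ x = ψ x) → ValidOn G S φ L → ValidOn G S ψ L := by
  intro L
  induction L with
  | nil => intro φ ψ _ _; trivial
  | cons m L ih =>
    intro φ ψ h hV
    obtain ⟨h1, h2, h3⟩ := hV
    have hupd : ∀ x ∈ S, Function.update φ m.1 m.2 x = Function.update ψ m.1 m.2 x := by
      intro x hx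
      by_cases hxm : x = m.1
      · subst hxm; simp
      · rw [Function.update_of_ne hxm, Function.update_of_ne hxm]; exact h x hx
    exact ⟨h1, properOn_congr G hupd h2, ih hupd h3⟩

lemma validOn_append {S : Finset V} : ∀ {L₁ L₂ : List (V × Fin c)} {φ : V → Fin c},
    ValidOn G S φ L₁ → ValidOn G S (applyMoves φ L₁) L₂ → ValidOn G S φ (L₁ ++ L₂) := by
  intro L₁
  induction L₁ with
  | nil => intro L₂ φ _ h; exact h
  | cons m L ih =>
    intro L₂ φ hV h
    obtain ⟨h1, h2, h3⟩ := hV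
    exact ⟨h1, h2, ih h3 h⟩

lemma applyMoves_agree {v : V} : ∀ (L : List (V × Fin c)) (φ ψ : V → Fin c),
    (∀ x, x ≠ v → φ x = ψ x) → ∀ x, x ≠ v → applyMoves φ L x = applyMoves ψ L x := by
  intro L
  induction L with
  | nil => intro φ ψ h x hx; exact h x hx
  | cons m L ih =>
    intro φ ψ h x hx
    simp only [applyMoves_cons]
    refine ih _ _ ?_ x hx
    intro y hy
    by_cases hym : y = m.1
    · subst hym; simp
    · rw [Function.update_of_ne hym, Function.update_of_ne hym]; exact h y hy

lemma applyMoves_of_not_mem : ∀ (L : List (V × Fin c)) (φ : V → Fin c) (x : V),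
    (∀ m ∈ L, m.1 ≠ x) → applyMoves φ L x = φ x := by
  intro L
  induction L with
  | nil => intro φ x _; rfl
  | cons m L ih =>
    intro φ x h
    simp only [applyMoves_cons]
    rw [ih _ x (fun m' hm' => h m' (List.mem_cons_of_mem _ hm'))]
    exact Function.update_of_ne (Ne.symm (h m List.mem_cons_self)) _ _

/-- Updating a non-`v` vertex keeps properness on `S`, given the update is proper away
from `v` and the new color avoids `v`'s color when relevant. -/
lemma properOn_update {S : Finset V} {φ : V → Fin c} {v u : V} {a : Fin c}
    (hP : ProperOn G S φ) (hP' : ProperOn G (S.erase v) (Function.update φ u a))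
    (huv : u ≠ v) (ha : G.Adj v u → a ≠ φ v) :
    ProperOn G S (Function.update φ u a) := by
  have hvval : Function.update φ u a v = φ v := Function.update_of_ne (Ne.symm huv) _ _
  intro x hx y hy hadj
  by_cases hxv : x = v
  · rw [hxv] at hx hadj ⊢
    by_cases hyv : y = v
    · rw [hyv] at hadj; exact absurd hadj (G.loopless.irrefl v)
    · rw [hvval]
      by_cases hyu : y = u
      · rw [hyu] at hadj ⊢
        rw [Function.update_self]
        exact (ha hadj).symm
      · rw [Function.update_of_ne hyu]; exact hP v hx y hy hadj
  · by_cases hyv : y = v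
    · rw [hyv] at hy hadj ⊢
      rw [hvval]
      by_cases hxu : x = u
      · rw [hxu] at hadj ⊢
        rw [Function.update_self]
        exact ha hadj.symm
      · rw [Function.update_of_ne hxu]; exact hP x hx v hy hadj
    · exact hP' x (Finset.mem_erase.mpr ⟨hxv, hx⟩) y (Finset.mem_erase.mpr ⟨hyv, hy⟩) hadj

/-- Recoloring `v` with a color avoiding its neighborhood keeps properness. -/
lemma properOn_update_v {S : Finset V} {φ : V → Fin c} {v : V} {col : Fin c}
    (hP : ProperOn G S φ) (hcol : ∀ u ∈ S, G.Adj v u → col ≠ φ u) :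
    ProperOn G S (Function.update φ v col) := by
  intro x hx y hy hadj
  by_cases hxv : x = v
  · rw [hxv] at hadj ⊢
    by_cases hyv : y = v
    · rw [hyv] at hadj; exact absurd hadj (G.loopless.irrefl v)
    · rw [Function.update_self, Function.update_of_ne hyv]
      exact hcol y hy hadj
  · rw [Function.update_of_ne hxv]
    by_cases hyv : y = v
    · rw [hyv] at hadj ⊢
      rw [Function.update_self]
      exact (hcol x hx hadj.symm).symm
    · rw [Function.update_of_ne hyv]
      exact hP x hx y hy hadj

/-- Number of moves recoloring a neighbor of `v`. -/
def nbMoves (v : V) : List (V × Fin c) → ℕ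
  | [] => 0
  | m :: L => (if G.Adj v m.1 then 1 else 0) + nbMoves v L

/-- `Safe v col L b`: the first `b` neighbor-of-`v` moves in `L` do not use color `col`. -/
def Safe (v : V) (col : Fin c) : List (V × Fin c) → ℕ → Prop
  | _, 0 => True
  | [], _ => True
  | m :: L, b+1 => if G.Adj v m.1 then (col ≠ m.2 ∧ Safe v col L b) else Safe v col L (b+1)

lemma safe_zero (v : V) (col : Fin c) : ∀ L : List (V × Fin c), Safe G v col L 0 := by
  intro L; cases L <;> trivial

/-- There are at most `b` colors that violate `Safe · L b`. -/
lemma exists_safe_finset (v : V) : ∀ (L : List (V × Fin c)) (b : ℕ),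
    ∃ F : Finset (Fin c), F.card ≤ b ∧ ∀ col ∉ F, Safe G v col L b := by
  intro L
  induction L with
  | nil => intro b; exact ⟨∅, by simp, fun col _ => by cases b <;> trivial⟩
  | cons m L ih =>
    intro b
    cases b with
    | zero => exact ⟨∅, by simp, fun col _ => trivial⟩
    | succ b' =>
      by_cases hadj : G.Adj v m.1
      · obtain ⟨F, hF, hsafe⟩ := ih b'
        refine ⟨insert m.2 F, le_trans (Finset.card_insert_le _ _) (by omega), ?_⟩
        intro col hcol
        simp only [Finset.mem_insert, not_or] at hcol
        simp only [Safe, if_pos hadj]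
        exact ⟨hcol.1, hsafe col hcol.2⟩
      · obtain ⟨F, hF, hsafe⟩ := ih (b' + 1)
        refine ⟨F, by omega, ?_⟩
        intro col hcol
        simp only [Safe, if_neg hadj]
        exact hsafe col hcol

lemma length_le_of_count (l : List V) (T : Finset V) (k : ℕ)
    (hmem : ∀ x ∈ l, x ∈ T) (hcount : ∀ x, l.count x ≤ k) :
    l.length ≤ T.card * k := by
  have h1 : ∑ x ∈ l.toFinset, l.count x = l.length := by
    simpa using Multiset.toFinset_sum_count_eq (l : Multiset V)
  rw [← h1]
  calc ∑ x ∈ l.toFinset, l.count x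
      ≤ ∑ x ∈ T, l.count x :=
        Finset.sum_le_sum_of_subset (fun x hx => hmem x (List.mem_toFinset.mp hx))
    _ ≤ ∑ _x ∈ T, k := Finset.sum_le_sum (fun x _ => hcount x)
    _ = T.card * k := by rw [Finset.sum_const, smul_eq_mul]

lemma nbMoves_le (v : V) (S : Finset V) (k : ℕ) (L : List (V × Fin c))
    (hmem : ∀ m ∈ L, m.1 ∈ S) (hcount : ∀ x, (L.map Prod.fst).count x ≤ k) :
    nbMoves G v L ≤ (S.filter (fun u => G.Adj v u)).card * k := by
  have heq : ∀ L' : List (V × Fin c),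
      nbMoves G v L' = ((L'.map Prod.fst).filter (fun u => G.Adj v u)).length := by
    intro L'
    induction L' with
    | nil => rfl
    | cons m L' ih =>
      by_cases h : G.Adj v m.1 <;>
        simp [nbMoves, List.filter_cons, h, ih, Nat.add_comm]
  rw [heq]
  apply length_le_of_count
  · intro x hx
    rw [List.mem_filter] at hx
    obtain ⟨hx1, hx2⟩ := hx
    rw [Finset.mem_filter]
    obtain ⟨m, hm, rfl⟩ := List.mem_map.mp hx1
    exact ⟨hmem m hm, by simpa using hx2⟩
  · intro x
    exact le_trans ((List.filter_sublist (l := L.map Prod.fst)).count_le x) (hcount x)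

/-- The key interleaving construction: given a valid sequence on `S.erase v`, extend it
to a valid sequence on `S` by inserting recolorings of `v` when needed. -/
lemma interleave (d : ℕ) (S : Finset V) (v : V) (hv : v ∈ S)
    (hN : (S.filter (fun u => G.Adj v u)).card ≤ d) (hc : 2 * d + 2 ≤ c) :
    ∀ (L' : List (V × Fin c)) (φ : V → Fin c) (b : ℕ),
      ProperOn G S φ → ValidOn G (S.erase v) φ L' → Safe G v (φ v) L' b →
      ∃ (L : List (V × Fin c)) (k : ℕ),
        ValidOn G S φ L ∧
        (∀ u, u ≠ v → applyMoves φ L u = applyMoves φ L' u) ∧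
        (∀ u, u ≠ v → (L.map Prod.fst).count u = (L'.map Prod.fst).count u) ∧
        (L.map Prod.fst).count v = k ∧
        k * (d + 1) ≤ nbMoves G v L' + (d - b) := by
  intro L'
  induction L' with
  | nil =>
    intro φ b _ _ _
    exact ⟨[], 0, trivial, fun _ _ => rfl, fun _ _ => rfl, by simp, by simp⟩
  | cons m L'' ih =>
    obtain ⟨u, a⟩ := m
    intro φ b hP hV hS
    obtain ⟨hu, hP', hV''⟩ := hV
    have huv : u ≠ v := (Finset.mem_erase.mp hu).1
    have huS : u ∈ S := (Finset.mem_erase.mp hu).2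
    have hupdv : ∀ (ψ : V → Fin c) (a' : Fin c), Function.update ψ u a' v = ψ v :=
      fun ψ a' => Function.update_of_ne (Ne.symm huv) _ _
    by_cases hadj : G.Adj v u
    · cases b with
      | zero =>
        -- must recolor `v` first
        obtain ⟨F, hFcard, hFsafe⟩ := exists_safe_finset G v ((u, a) :: L'') (d + 1)
        set Forb := ((S.filter (fun w => G.Adj v w)).image φ) ∪ F with hForbDef
        have hcard : Forb.card < c := by
          have h1 : ((S.filter (fun w => G.Adj v w)).image φ).card ≤ d :=
            le_trans (Finset.card_image_le) hN
          have h2 : Forb.card ≤ d + (d + 1) :=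
            le_trans (Finset.card_union_le _ _) (by omega)
          omega
        have hex : ∃ col : Fin c, col ∉ Forb := by
          by_contra hcon
          push_neg at hcon
          have : Finset.univ ⊆ Forb := fun x _ => hcon x
          have := Finset.card_le_card this
          simp at this
          omega
        obtain ⟨col, hcol⟩ := hex
        have hcolN : ∀ w ∈ S, G.Adj v w → col ≠ φ w := by
          intro w hw hvw hcoleq
          apply hcol
          rw [hForbDef]
          apply Finset.mem_union_left
          exact Finset.mem_image.mpr ⟨w, Finset.mem_filter.mpr ⟨hw, hvw⟩, hcoleq.symm⟩
        have hcolF : col ∉ F := fun h => hcol (Finset.mem_union_right _ h)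
        have hsafe_col : Safe G v col ((u, a) :: L'') (d + 1) := hFsafe col hcolF
        have hsafe1 : col ≠ a ∧ Safe G v col L'' d := by
          simpa [Safe, if_pos hadj] using hsafe_col
        set φ₂ := Function.update φ v col with hφ₂
        have hP₂ : ProperOn G S φ₂ := properOn_update_v G hP hcolN
        have hagree₂ : ∀ x, x ≠ v → φ x = φ₂ x :=
          fun x hx => (Function.update_of_ne hx col φ).symm
        have hV₂ : ValidOn G (S.erase v) φ₂ ((u, a) :: L'') :=
          validOn_congr G (fun x hx => hagree₂ x (Finset.mem_erase.mp hx).1) ⟨hu, hP', hV''⟩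
        obtain ⟨-, hP₂', hV₂''⟩ := hV₂
        set φ₃ := Function.update φ₂ u a with hφ₃
        have hφ₂v : φ₂ v = col := Function.update_self v col φ
        have hP₃ : ProperOn G S φ₃ :=
          properOn_update G hP₂ hP₂' huv (fun _ => by rw [hφ₂v]; exact hsafe1.1.symm)
        have hφ₃v : φ₃ v = col := by rw [hφ₃, hupdv, hφ₂v]
        have hsafe₃ : Safe G v (φ₃ v) L'' d := by rw [hφ₃v]; exact hsafe1.2
        obtain ⟨L₁, k₁, hVa, happ, hcnt, hcv, hk⟩ := ih φ₃ d hP₃ hV₂'' hsafe₃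
        refine ⟨(v, col) :: (u, a) :: L₁, k₁ + 1, ⟨hv, hP₂, huS, hP₃, hVa⟩, ?_, ?_, ?_, ?_⟩
        · intro x hx
          simp only [applyMoves_cons]
          have h1 : applyMoves φ₃ L₁ x = applyMoves φ₃ L'' x := happ x hx
          have h2 : applyMoves φ₃ L'' x = applyMoves (Function.update φ u a) L'' x := by
            apply applyMoves_agree (v := v)
            · intro y hy
              by_cases hyu : y = u
              · rw [hyu, hφ₃]; simp
              · rw [hφ₃, Function.update_of_ne hyu, Function.update_of_ne hyu]
                exact (hagree₂ y hy).symm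
            · exact hx
          exact h1.trans h2
        · intro x hx
          simp only [List.map_cons]
          rw [List.count_cons_of_ne (Ne.symm hx), List.count_cons, List.count_cons, hcnt x hx]
        · simp only [List.map_cons]
          rw [List.count_cons_self, List.count_cons_of_ne huv, hcv]
        · have hnb : nbMoves G v ((u, a) :: L'') = 1 + nbMoves G v L'' := by
            simp [nbMoves, if_pos hadj]
          calc (k₁ + 1) * (d + 1) = k₁ * (d + 1) + (d + 1) := by ring
            _ ≤ (nbMoves G v L'' + (d - d)) + (d + 1) := Nat.add_le_add_right hk _
            _ = nbMoves G v L'' + (d + 1) := by omega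
            _ ≤ nbMoves G v ((u, a) :: L'') + (d - 0) := by rw [hnb]; omega
      | succ b' =>
        have hsafe1 : φ v ≠ a ∧ Safe G v (φ v) L'' b' := by
          simpa [Safe, if_pos hadj] using hS
        have hP₁ : ProperOn G S (Function.update φ u a) :=
          properOn_update G hP hP' huv (fun _ => hsafe1.1.symm)
        have hsafe' : Safe G v (Function.update φ u a v) L'' b' := by
          rw [hupdv]; exact hsafe1.2
        obtain ⟨L₁, k, hVa, happ, hcnt, hcv, hk⟩ := ih (Function.update φ u a) b' hP₁ hV'' hsafe'
        refine ⟨(u, a) :: L₁, k, ⟨huS, hP₁, hVa⟩, ?_, ?_, ?_, ?_⟩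
        · intro x hx
          simp only [applyMoves_cons]
          exact happ x hx
        · intro x hx
          simp only [List.map_cons]
          rw [List.count_cons, List.count_cons, hcnt x hx]
        · simp only [List.map_cons]
          rw [List.count_cons_of_ne huv, hcv]
        · have hnb : nbMoves G v ((u, a) :: L'') = 1 + nbMoves G v L'' := by
            simp [nbMoves, if_pos hadj]
          refine le_trans hk ?_
          rw [hnb]; omega
    · -- the move does not touch a neighbor of `v`
      have hS' : Safe G v (φ v) L'' b := by
        cases b with
        | zero => exact safe_zero G v _ L''
        | succ b' => simpa [Safe, if_neg hadj] using hS
      have hP₁ : ProperOn G S (Function.update φ u a) :=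
        properOn_update G hP hP' huv (fun h => absurd h hadj)
      have hsafe' : Safe G v (Function.update φ u a v) L'' b := by
        rw [hupdv]; exact hS'
      obtain ⟨L₁, k, hVa, happ, hcnt, hcv, hk⟩ := ih (Function.update φ u a) b hP₁ hV'' hsafe'
      refine ⟨(u, a) :: L₁, k, ⟨huS, hP₁, hVa⟩, ?_, ?_, ?_, ?_⟩
      · intro x hx
        simp only [applyMoves_cons]
        exact happ x hx
      · intro x hx
        simp only [List.map_cons]
        rw [List.count_cons, List.count_cons, hcnt x hx]
      · simp only [List.map_cons]
        rw [List.count_cons_of_ne huv, hcv]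
      · have hnb : nbMoves G v ((u, a) :: L'') = 0 + nbMoves G v L'' := by
          simp [nbMoves, if_neg hadj]
        refine le_trans hk ?_
        rw [hnb]; omega

/-- Main lemma: any two colorings proper on `S` are connected by a valid sequence
recoloring each vertex at most `d+1` times. -/
lemma main (d : ℕ) (hdeg : Degenerate G d) (hc : 2 * d + 2 ≤ c) (S : Finset V) :
    ∀ α β : V → Fin c, ProperOn G S α → ProperOn G S β →
      ∃ L : List (V × Fin c), ValidOn G S α L ∧ (∀ u ∈ S, applyMoves α L u = β u) ∧
        (∀ u, (L.map Prod.fst).count u ≤ d + 1) := by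
  induction S using Finset.strongInduction with
  | _ S ihS =>
    intro α β hα hβ
    rcases S.eq_empty_or_nonempty with rfl | hne
    · exact ⟨[], trivial, by simp, by simp⟩
    obtain ⟨v, hv, hN⟩ := hdeg S hne
    have hsub : S.erase v ⊆ S := Finset.erase_subset v S
    obtain ⟨L', hV', happ', hcnt'⟩ := ihS _ (Finset.erase_ssubset hv) α β
      (properOn_mono G hsub hα) (properOn_mono G hsub hβ)
    obtain ⟨L, k, hV, happ, hcnt, hcv, hk⟩ :=
      interleave G d S v hv hN hc L' α 0 hα hV' (safe_zero G v _ L')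
    have hmem' : ∀ m ∈ L', m.1 ∈ S.erase v := validOn_mem G hV'
    -- bound the number of recolorings of `v`
    have hnb : nbMoves G v L' ≤ d * (d + 1) := by
      refine le_trans (nbMoves_le G v (S.erase v) (d + 1) L' hmem' hcnt') ?_
      refine Nat.mul_le_mul_right _ ?_
      refine le_trans (Finset.card_le_card ?_) hN
      intro x hx
      rw [Finset.mem_filter] at hx ⊢
      exact ⟨hsub hx.1, hx.2⟩
    have hkd : k ≤ d := by
      have h1 : k * (d + 1) ≤ d * (d + 1) + d := by
        refine le_trans hk ?_
        have : d - 0 = d := rfl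
        rw [this]
        exact Nat.add_le_add_right hnb _
      by_contra hcon
      push_neg at hcon
      have h2 : (d + 1) * (d + 1) ≤ k * (d + 1) := Nat.mul_le_mul_right _ hcon
      nlinarith
    set φE := applyMoves α L with hφE
    have hfix : ∀ x ∈ S, Function.update φE v (β v) x = β x := by
      intro x hx
      by_cases hxv : x = v
      · rw [hxv, Function.update_self]
      · rw [Function.update_of_ne hxv]
        exact (happ x hxv).trans (happ' x (Finset.mem_erase.mpr ⟨hxv, hx⟩))
    refine ⟨L ++ [(v, β v)], ?_, ?_, ?_⟩
    · refine validOn_append G hV ⟨hv, ?_, trivial⟩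
      exact properOn_congr G (fun x hx => (hfix x hx).symm) hβ
    · intro x hx
      rw [applyMoves_append]
      exact hfix x hx
    · intro x
      rw [List.map_append, List.count_append]
      by_cases hxv : x = v
      · rw [hxv, hcv]
        simp only [List.map_cons, List.map_nil, List.count_cons_self, List.count_nil]
        omega
      · rw [hcnt x hxv]
        have : ([(v, β v)].map Prod.fst).count x = 0 := by
          simp [List.count_cons, Ne.symm hxv]
        rw [this]
        simpa using hcnt' x

/-- Converting a valid sequence of moves to a walk in the reconfiguration graph. -/
lemma toWalk (L : List (V × Fin c)) :
    ∀ (α β : ProperKColoring G c), ValidOn G Finset.univ α.1 L →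
      (∀ x, applyMoves α.1 L x = β.1 x) →
      ∃ p : (recolorGraph G c).Walk α β, p.length ≤ L.length := by
  induction L with
  | nil =>
    intro α β _ hE
    have : α = β := Subtype.ext (funext hE)
    rw [this]
    exact ⟨SimpleGraph.Walk.nil, by simp⟩
  | cons m L ih =>
    obtain ⟨u, a⟩ := m
    intro α β hV hE
    obtain ⟨-, hP, hV'⟩ := hV
    by_cases h : a = α.1 u
    · have hupd : Function.update α.1 u a = α.1 := by
        rw [h]; exact Function.update_eq_self u α.1
      have hV'' : ValidOn G Finset.univ α.1 L := by rw [← hupd]; exact hV'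
      have hE' : ∀ x, applyMoves α.1 L x = β.1 x := by
        intro x
        rw [← hE x]
        simp only [applyMoves_cons]
        rw [hupd]
      obtain ⟨p, hp⟩ := ih α β hV'' hE'
      exact ⟨p, le_trans hp (by simp)⟩
    · set φ' := Function.update α.1 u a with hφ'
      have hproper : ∀ x y : V, G.Adj x y → φ' x ≠ φ' y :=
        fun x y hxy => hP x (Finset.mem_univ x) y (Finset.mem_univ y) hxy
      set α' : ProperKColoring G c := ⟨φ', hproper⟩ with hα'
      have hadj : (recolorGraph G c).Adj α α' := by
        refine ⟨u, ?_, ?_⟩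
        · show α.1 u ≠ φ' u
          rw [hφ', Function.update_self]
          exact fun hh => h hh.symm
        · intro y hy
          show α.1 y = φ' y
          rw [hφ', Function.update_of_ne hy]
      obtain ⟨p, hp⟩ := ih α' β hV' hE
      exact ⟨SimpleGraph.Walk.cons hadj p, by simpa using Nat.succ_le_succ hp⟩

end BPAux

/-- Bousquet–Perarnau: if `G` is a `d`-degenerate graph on `n` vertices and `c ≥ 2d + 2`,
then `R_c(G)` has diameter at most `(d+1) * n`. -/
theorem diameter_recolor_of_degenerate {V : Type*} [Fintype V] [DecidableEq V]
    (G : SimpleGraph V) [DecidableRel G.Adj] (d c : ℕ) (hd : 1 ≤ d)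
    (hdeg : Degenerate G d) (hc : 2 * d + 2 ≤ c)
    (α β : ProperKColoring G c) :
    ∃ p : (recolorGraph G c).Walk α β, p.length ≤ (d + 1) * Fintype.card V := by
  classical
  obtain ⟨L, hV, happ, hcnt⟩ := BPAux.main G d hdeg hc Finset.univ α.1 β.1
    (fun u _ w _ h => α.2 u w h) (fun u _ w _ h => β.2 u w h)
  obtain ⟨p, hp⟩ := BPAux.toWalk G L α β hV (fun x => happ x (Finset.mem_univ x))
  refine ⟨p, le_trans hp ?_⟩
  have hlen : (L.map Prod.fst).length ≤ Finset.univ.card * (d + 1) :=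
    BPAux.length_le_of_count (L.map Prod.fst) Finset.univ (d + 1)
      (fun x _ => Finset.mem_univ x) hcnt
  rw [List.length_map] at hlen
  rw [Finset.card_univ] at hlen
  calc L.length ≤ Fintype.card V * (d + 1) := hlen
    _ = (d + 1) * Fintype.card V := Nat.mul_comm _ _
end

section
/- Let c and d be positive integers and let D be a nonnegative integer. Let G be a d-degenerate graph on n vertices such that G is L-colorable for every list assignment L with |L(v)| = c for all vertices v. Then for every independent set I in G, if the reconfiguration graph R_{c+d}(G−I) has diameter at most D, the reconfiguration graph R_{c+d+1}(G) has diameter at most 2(n + |I|) + D. -/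
lemma exists_rank {V : Type*} [Fintype V] [DecidableEq V] (G : SimpleGraph V)
    [DecidableRel G.Adj] (d : ℕ) (hdeg : Degenerate G d) (S : Finset V) :
    ∃ rank : V → ℕ,
      (∀ v ∈ S, rank v < S.card) ∧
      (∀ v ∈ S, ∀ u ∈ S, v ≠ u → rank v ≠ rank u) ∧
      (∀ v ∈ S, (S.filter (fun u => G.Adj v u ∧ rank v < rank u)).card ≤ d) := by
  induction S using Finset.strongInduction with
  | _ S ih =>
    rcases S.eq_empty_or_nonempty with rfl | hS
    · exact ⟨fun _ => 0, by simp, by simp, by simp⟩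
    obtain ⟨v₀, hv₀S, hv₀⟩ := hdeg S hS
    obtain ⟨r, hr1, hr2, hr3⟩ := ih (S.erase v₀) (Finset.erase_ssubset hv₀S)
    refine ⟨fun u => if u = v₀ then 0 else r u + 1, ?_, ?_, ?_⟩
    · intro v hv
      by_cases h : v = v₀
      · simp only [if_pos h]
        exact hS.card_pos
      · simp only [if_neg h]
        have := hr1 v (Finset.mem_erase.mpr ⟨h, hv⟩)
        rw [Finset.card_erase_of_mem hv₀S] at this
        have := hS.card_pos
        omega
    · intro v hv u hu hne
      by_cases h1 : v = v₀ <;> by_cases h2 : u = v₀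
      · exact absurd (h1.trans h2.symm) hne
      · simp [h1, h2]
      · simp [h1, h2]
      · simp only [if_neg h1, if_neg h2]
        have := hr2 v (Finset.mem_erase.mpr ⟨h1, hv⟩) u (Finset.mem_erase.mpr ⟨h2, hu⟩) hne
        omega
    · intro v hv
      by_cases h : v = v₀
      · subst h
        refine le_trans (Finset.card_le_card ?_) hv₀
        intro u hu
        simp only [Finset.mem_filter] at hu ⊢
        exact ⟨hu.1, hu.2.1⟩
      · refine le_trans (Finset.card_le_card ?_) (hr3 v (Finset.mem_erase.mpr ⟨h, hv⟩))
        intro u hu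
        simp only [Finset.mem_filter, Finset.mem_erase] at hu ⊢
        obtain ⟨huS, hadj, hlt⟩ := hu
        simp only [if_neg h] at hlt
        by_cases h2 : u = v₀
        · simp [h2] at hlt
        · simp only [if_neg h2] at hlt
          exact ⟨⟨h2, huS⟩, hadj, by omega⟩

lemma walk_of_chain {V : Type*} (G : SimpleGraph V) (k : ℕ)
    (h : ℕ → ProperKColoring G k) (T : ℕ)
    (hadj : ∀ t, t < T → (recolorGraph G k).Adj (h t) (h (t+1)) ∨ h t = h (t+1)) :
    ∃ p : (recolorGraph G k).Walk (h 0) (h T), p.length ≤ T := by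
  induction T with
  | zero => exact ⟨.nil, le_refl 0⟩
  | succ T ihT =>
    obtain ⟨p, hp⟩ := ihT (fun t ht => hadj t (ht.trans (Nat.lt_succ_self T)))
    rcases hadj T (Nat.lt_succ_self T) with hA | hE
    · exact ⟨p.concat hA, by rw [SimpleGraph.Walk.length_concat]; omega⟩
    · exact ⟨p.copy rfl hE, by rw [SimpleGraph.Walk.length_copy]; omega⟩

/-- Let `G` be a `d`-degenerate graph on `n` vertices that is `L`-colorable from every
assignment of lists of size `c`.  Then for every independent set `I` in `G`, if
`R_{c+d}(G - I)` has diameter at most `D`, then `R_{c+d+1}(G)` has diameter at most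
`2 * (n + |I|) + D`. -/
theorem diameter_recolor_of_degenerate_choosable {V : Type*} [Fintype V] [DecidableEq V]
    (G : SimpleGraph V) [DecidableRel G.Adj] (c d D : ℕ) (hc : 1 ≤ c) (hd : 1 ≤ d)
    (hdeg : Degenerate G d)
    (hchoos : ∀ L : V → Finset ℕ, (∀ v : V, (L v).card = c) →
      ∃ φ : V → ℕ, (∀ v : V, φ v ∈ L v) ∧ ∀ u v : V, G.Adj u v → φ u ≠ φ v)
    (I : Finset V) (hI : ∀ u ∈ I, ∀ v ∈ I, ¬ G.Adj u v)
    (hdiam : ∀ β β' : ProperKColoring (G.induce ((I : Set V)ᶜ)) (c + d),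
      ∃ q : (recolorGraph (G.induce ((I : Set V)ᶜ)) (c + d)).Walk β β',
        q.length ≤ D) :
    ∀ α α' : ProperKColoring G (c + d + 1),
      ∃ p : (recolorGraph G (c + d + 1)).Walk α α',
        p.length ≤ 2 * (Fintype.card V + I.card) + D := by
  classical
  obtain ⟨rank, hrank_lt, hrank_inj, hrank_deg⟩ := exists_rank G d hdeg Finset.univ
  obtain ⟨rI, hrI_lt, hrI_inj, -⟩ := exists_rank G d hdeg I
  have key : ∀ α : ProperKColoring G (c + d + 1),
      ∃ β : ProperKColoring G (c + d + 1),
        (∀ v ∈ I, β.1 v = Fin.last (c + d)) ∧ (∀ v ∉ I, β.1 v ≠ Fin.last (c + d)) ∧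
        ∃ p : (recolorGraph G (c + d + 1)).Walk α β,
          p.length ≤ Fintype.card V + I.card := by
    intro α
    have hB : ∀ v : V, c ≤ ((Finset.range (c + d)) \
        ((Finset.univ.filter (fun u => G.Adj v u ∧ rank v < rank u)).image
          (fun u => (α.1 u).val))).card := by
      intro v
      set X := (Finset.univ.filter (fun u => G.Adj v u ∧ rank v < rank u)).image
        (fun u => (α.1 u).val) with hX
      have hh1 := Finset.card_sdiff_add_card (s := Finset.range (c + d)) (t := X)
      have hh2 : (Finset.range (c + d)).card ≤ ((Finset.range (c + d)) ∪ X).card :=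
        Finset.card_le_card Finset.subset_union_left
      have hh3 : X.card ≤ d :=
        le_trans Finset.card_image_le (hrank_deg v (Finset.mem_univ v))
      rw [Finset.card_range] at *
      omega
    choose L hLsub hLcard using fun v => Finset.exists_subset_card_eq (hB v)
    obtain ⟨φ, hφmem, hφprop⟩ := hchoos L hLcard
    have hφlt : ∀ v, φ v < c + d := fun v =>
      Finset.mem_range.mp (Finset.mem_sdiff.mp (hLsub v (hφmem v))).1
    have hφavoid : ∀ v u, G.Adj v u → rank v < rank u → φ v ≠ (α.1 u).val := by
      intro v u hadj hlt heq
      exact (Finset.mem_sdiff.mp (hLsub v (hφmem v))).2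
        (Finset.mem_image.mpr ⟨u, Finset.mem_filter.mpr ⟨Finset.mem_univ u, hadj, hlt⟩, heq.symm⟩)
    set φf : V → Fin (c + d + 1) := fun v => ⟨φ v, (hφlt v).trans (Nat.lt_succ_self _)⟩ with hφfdef
    have hproper1 : ∀ t : ℕ, ∀ u v : V, G.Adj u v →
        (if rank u < t then φf u else α.1 u) ≠ (if rank v < t then φf v else α.1 v) := by
      intro t u v hadj
      by_cases hu : rank u < t <;> by_cases hv : rank v < t
      · rw [if_pos hu, if_pos hv]
        intro h
        exact hφprop u v hadj (by simpa [φf, Fin.ext_iff] using h)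
      · rw [if_pos hu, if_neg hv]
        intro h
        exact hφavoid u v hadj (by omega) (by simpa [φf, Fin.ext_iff] using h)
      · rw [if_neg hu, if_pos hv]
        intro h
        exact hφavoid v u hadj.symm (by omega) (by simpa [φf, Fin.ext_iff] using h.symm)
      · rw [if_neg hu, if_neg hv]
        exact α.2 u v hadj
    set h1 : ℕ → ProperKColoring G (c + d + 1) :=
      fun t => ⟨fun v => if rank v < t then φf v else α.1 v, hproper1 t⟩ with hh1
    have hproper2 : ∀ t : ℕ, ∀ u v : V, G.Adj u v →
        (if u ∈ I ∧ rI u < t then Fin.last (c + d) else φf u) ≠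
        (if v ∈ I ∧ rI v < t then Fin.last (c + d) else φf v) := by
      intro t u v hadj
      by_cases hu : u ∈ I ∧ rI u < t <;> by_cases hv : v ∈ I ∧ rI v < t
      · exact absurd hadj (hI u hu.1 v hv.1)
      · rw [if_pos hu, if_neg hv]
        intro h
        have := hφlt v
        simp only [φf, Fin.ext_iff, Fin.val_last] at h
        omega
      · rw [if_neg hu, if_pos hv]
        intro h
        have := hφlt u
        simp only [φf, Fin.ext_iff, Fin.val_last] at h
        omega
      · rw [if_neg hu, if_neg hv]
        intro h
        exact hφprop u v hadj (by simpa [φf, Fin.ext_iff] using h)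
    set h2 : ℕ → ProperKColoring G (c + d + 1) :=
      fun t => ⟨fun v => if v ∈ I ∧ rI v < t then Fin.last (c + d) else φf v, hproper2 t⟩ with hh2
    have hchain1 : ∀ t, t < Fintype.card V →
        (recolorGraph G (c + d + 1)).Adj (h1 t) (h1 (t + 1)) ∨ h1 t = h1 (t + 1) := by
      intro t ht
      by_cases hex : ∃ x : V, rank x = t ∧ φf x ≠ α.1 x
      · obtain ⟨x, hxt, hxne⟩ := hex
        left
        refine ⟨x, ?_, ?_⟩
        · show (if rank x < t then φf x else α.1 x) ≠ (if rank x < t + 1 then φf x else α.1 x)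
          rw [if_neg (by omega), if_pos (by omega)]
          exact fun h => hxne h.symm
        · intro y hy
          show (if rank y < t then φf y else α.1 y) = (if rank y < t + 1 then φf y else α.1 y)
          have hne : rank y ≠ t := by
            intro h
            exact hrank_inj y (Finset.mem_univ y) x (Finset.mem_univ x) hy (by rw [h, hxt])
          by_cases h : rank y < t
          · rw [if_pos h, if_pos (by omega)]
          · rw [if_neg h, if_neg (by omega)]
      · right
        push_neg at hex
        apply Subtype.ext
        funext v
        show (if rank v < t then φf v else α.1 v) = (if rank v < t + 1 then φf v else α.1 v)
        by_cases h : rank v < t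
        · rw [if_pos h, if_pos (by omega)]
        · by_cases h2 : rank v < t + 1
          · rw [if_neg h, if_pos h2]
            exact (hex v (by omega)).symm
          · rw [if_neg h, if_neg h2]
    have hchain2 : ∀ t, t < I.card →
        (recolorGraph G (c + d + 1)).Adj (h2 t) (h2 (t + 1)) ∨ h2 t = h2 (t + 1) := by
      intro t ht
      by_cases hex : ∃ x : V, x ∈ I ∧ rI x = t ∧ φf x ≠ Fin.last (c + d)
      · obtain ⟨x, hxI, hxt, hxne⟩ := hex
        left
        refine ⟨x, ?_, ?_⟩
        · show (if x ∈ I ∧ rI x < t then Fin.last (c + d) else φf x) ≠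
            (if x ∈ I ∧ rI x < t + 1 then Fin.last (c + d) else φf x)
          rw [if_neg (fun hh => absurd hh.2 (by omega)), if_pos ⟨hxI, by omega⟩]
          exact hxne
        · intro y hy
          show (if y ∈ I ∧ rI y < t then Fin.last (c + d) else φf y) =
            (if y ∈ I ∧ rI y < t + 1 then Fin.last (c + d) else φf y)
          by_cases hyI : y ∈ I
          · have hne : rI y ≠ t := by
              intro h
              exact hrI_inj y hyI x hxI hy (by rw [h, hxt])
            by_cases h : rI y < t
            · rw [if_pos ⟨hyI, h⟩, if_pos ⟨hyI, by omega⟩]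
            · rw [if_neg (fun hh => h hh.2), if_neg (fun hh => hne (by omega))]
          · rw [if_neg (fun hh => hyI hh.1), if_neg (fun hh => hyI hh.1)]
      · right
        push_neg at hex
        apply Subtype.ext
        funext v
        show (if v ∈ I ∧ rI v < t then Fin.last (c + d) else φf v) =
          (if v ∈ I ∧ rI v < t + 1 then Fin.last (c + d) else φf v)
        by_cases hvI : v ∈ I
        · by_cases h : rI v < t
          · rw [if_pos ⟨hvI, h⟩, if_pos ⟨hvI, by omega⟩]
          · by_cases h2 : rI v < t + 1
            · rw [if_neg (fun hh => h hh.2), if_pos ⟨hvI, h2⟩]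
              exact hex v hvI (by omega)
            · rw [if_neg (fun hh => h hh.2), if_neg (fun hh => h2 hh.2)]
        · rw [if_neg (fun hh => hvI hh.1), if_neg (fun hh => hvI hh.1)]
    obtain ⟨p1, hp1⟩ := walk_of_chain G (c + d + 1) h1 (Fintype.card V) hchain1
    obtain ⟨p2, hp2⟩ := walk_of_chain G (c + d + 1) h2 I.card hchain2
    have e0 : h1 0 = α := by
      apply Subtype.ext
      funext v
      show (if rank v < 0 then φf v else α.1 v) = α.1 v
      rw [if_neg (by omega)]
    have e1 : h1 (Fintype.card V) = h2 0 := by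
      apply Subtype.ext
      funext v
      show (if rank v < Fintype.card V then φf v else α.1 v) =
        (if v ∈ I ∧ rI v < 0 then Fin.last (c + d) else φf v)
      rw [if_pos (by rw [← Finset.card_univ]; exact hrank_lt v (Finset.mem_univ v)),
        if_neg (fun hh => by omega)]
    refine ⟨h2 I.card, fun v hv => ?_, fun v hv => ?_, ?_⟩
    · show (if v ∈ I ∧ rI v < I.card then Fin.last (c + d) else φf v) = Fin.last (c + d)
      rw [if_pos ⟨hv, hrI_lt v hv⟩]
    · show (if v ∈ I ∧ rI v < I.card then Fin.last (c + d) else φf v) ≠ Fin.last (c + d)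
      rw [if_neg (fun hh => hv hh.1)]
      intro h
      have := hφlt v
      simp only [φf, Fin.ext_iff, Fin.val_last] at h
      omega
    · refine ⟨((p1.copy e0 e1).append p2), ?_⟩
      rw [SimpleGraph.Walk.length_append, SimpleGraph.Walk.length_copy]
      omega
  intro α α'
  obtain ⟨β, hβI, hβnI, p, hp⟩ := key α
  obtain ⟨β', hβI', hβnI', p', hp'⟩ := key α'
  have hlt : ∀ (γ : ProperKColoring G (c + d + 1)), (∀ v ∉ I, γ.1 v ≠ Fin.last (c + d)) →
      ∀ (v : ((I : Set V)ᶜ : Set V)), ((γ.1 ↑v).val) < c + d := by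
    intro γ hγ v
    have h1 : (↑v : V) ∉ I := v.2
    have h2 := hγ _ h1
    have h3 := (γ.1 ↑v).isLt
    rcases Nat.lt_or_ge ((γ.1 ↑v).val) (c + d) with h | h
    · exact h
    · exact absurd (Fin.ext (by simp only [Fin.val_last]; omega)) h2
  have hrprop : ∀ (γ : ProperKColoring G (c + d + 1))
      (hγ : ∀ v ∉ I, γ.1 v ≠ Fin.last (c + d)),
      ∀ u v : ((I : Set V)ᶜ : Set V), (G.induce ((I : Set V)ᶜ)).Adj u v →
        (⟨(γ.1 ↑u).val, hlt γ hγ u⟩ : Fin (c + d)) ≠ ⟨(γ.1 ↑v).val, hlt γ hγ v⟩ := by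
    intro γ hγ u v hadj h
    have hadj' : G.Adj ↑u ↑v := hadj
    exact γ.2 _ _ hadj' (Fin.ext (by simpa [Fin.ext_iff] using h))
  let rβ : ProperKColoring (G.induce ((I : Set V)ᶜ)) (c + d) :=
    ⟨fun v => ⟨(β.1 ↑v).val, hlt β hβnI v⟩, hrprop β hβnI⟩
  let rβ' : ProperKColoring (G.induce ((I : Set V)ᶜ)) (c + d) :=
    ⟨fun v => ⟨(β'.1 ↑v).val, hlt β' hβnI' v⟩, hrprop β' hβnI'⟩
  have hproperlift : ∀ (γ : ProperKColoring (G.induce ((I : Set V)ᶜ)) (c + d)) (u v : V),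
      G.Adj u v →
      (if h : u ∈ I then Fin.last (c + d) else (γ.1 ⟨u, by simpa using h⟩).castSucc) ≠
      (if h : v ∈ I then Fin.last (c + d) else (γ.1 ⟨v, by simpa using h⟩).castSucc) := by
    intro γ u v hadj
    by_cases hu : u ∈ I <;> by_cases hv : v ∈ I
    · exact absurd hadj (hI u hu v hv)
    · rw [dif_pos hu, dif_neg hv]
      exact fun h => absurd h.symm (Fin.castSucc_lt_last _).ne
    · rw [dif_neg hu, dif_pos hv]
      exact (Fin.castSucc_lt_last _).ne
    · rw [dif_neg hu, dif_neg hv]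
      intro h
      have hadj' : (G.induce ((I : Set V)ᶜ)).Adj ⟨u, by simpa using hu⟩ ⟨v, by simpa using hv⟩ := hadj
      exact γ.2 _ _ hadj' (Fin.castSucc_injective _ h)
  let liftF : ProperKColoring (G.induce ((I : Set V)ᶜ)) (c + d) → ProperKColoring G (c + d + 1) :=
    fun γ => ⟨fun v => if h : v ∈ I then Fin.last (c + d)
      else (γ.1 ⟨v, by simpa using h⟩).castSucc, hproperlift γ⟩
  have hhom : ∀ γ γ', (recolorGraph (G.induce ((I : Set V)ᶜ)) (c + d)).Adj γ γ' →
      (recolorGraph G (c + d + 1)).Adj (liftF γ) (liftF γ') := by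
    rintro γ γ' ⟨x, hx, hrest⟩
    have hxI : (↑x : V) ∉ I := x.2
    refine ⟨↑x, ?_, ?_⟩
    · show (if h : (↑x : V) ∈ I then Fin.last (c + d)
        else (γ.1 ⟨↑x, by simpa using h⟩).castSucc) ≠
        (if h : (↑x : V) ∈ I then Fin.last (c + d)
        else (γ'.1 ⟨↑x, by simpa using h⟩).castSucc)
      rw [dif_neg hxI, dif_neg hxI]
      exact fun h => hx (Fin.castSucc_injective _ h)
    · intro y hy
      show (if h : y ∈ I then Fin.last (c + d) else (γ.1 ⟨y, by simpa using h⟩).castSucc) =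
        (if h : y ∈ I then Fin.last (c + d) else (γ'.1 ⟨y, by simpa using h⟩).castSucc)
      by_cases hyI : y ∈ I
      · rw [dif_pos hyI, dif_pos hyI]
      · rw [dif_neg hyI, dif_neg hyI]
        congr 1
        exact hrest ⟨y, by simpa using hyI⟩ (fun h => hy (congrArg Subtype.val h))
  let hom : (recolorGraph (G.induce ((I : Set V)ᶜ)) (c + d)) →g (recolorGraph G (c + d + 1)) :=
    ⟨liftF, fun {γ γ'} h => hhom γ γ' h⟩
  obtain ⟨q, hq⟩ := hdiam rβ rβ'
  have eβ : liftF rβ = β := by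
    apply Subtype.ext
    funext v
    show (if h : v ∈ I then Fin.last (c + d) else ((rβ.1 ⟨v, by simpa using h⟩).castSucc)) = β.1 v
    by_cases hv : v ∈ I
    · rw [dif_pos hv]
      exact (hβI v hv).symm
    · rw [dif_neg hv]
      apply Fin.ext
      simp [rβ]
  have eβ' : liftF rβ' = β' := by
    apply Subtype.ext
    funext v
    show (if h : v ∈ I then Fin.last (c + d) else ((rβ'.1 ⟨v, by simpa using h⟩).castSucc)) = β'.1 v
    by_cases hv : v ∈ I
    · rw [dif_pos hv]
      exact (hβI' v hv).symm
    · rw [dif_neg hv]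
      apply Fin.ext
      simp [rβ']
  refine ⟨p.append (((q.map hom).copy eβ eβ').append p'.reverse), ?_⟩
  rw [SimpleGraph.Walk.length_append, SimpleGraph.Walk.length_append,
    SimpleGraph.Walk.length_copy, SimpleGraph.Walk.length_map,
    SimpleGraph.Walk.length_reverse]
  omega
end

section
/- Let H be an induced subgraph of a graph G and let L_1 and L_2 be list assignments for G. Let δ = (δ_0, δ_1, δ_2) be an (L_1, L_2)-trajectory in H witnessed by (σ_1, σ_2). If δ lifts to an (L_1, L_2)-trajectory φ in G, then this lifting is witnessed by a pair (π_1, π_2) of sequences of recolorings such that π_1^H = σ_1 and π_2^H = σ_2. -/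
/-- Applying a sequence of recolorings `(vertex, color)` to a coloring, one at a time. -/
def applySeq {V : Type*} [DecidableEq V] (φ : V → ℕ) (σ : List (V × ℕ)) : V → ℕ :=
  σ.foldl (fun ψ p => Function.update ψ p.1 p.2) φ

/-- `φ` is a proper coloring of the subgraph of `G` induced on the vertex set `S`. -/
def ProperOn {V : Type*} (G : SimpleGraph V) (S : Finset V) (φ : V → ℕ) : Prop :=
  ∀ u ∈ S, ∀ v ∈ S, G.Adj u v → φ u ≠ φ v

/-- A sequence of recolorings is proper (on `G[S]`, starting from `φ`) if every
intermediate coloring is a proper coloring of `G[S]`. -/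
def ProperSeqOn {V : Type*} [DecidableEq V] (G : SimpleGraph V) (S : Finset V)
    (φ : V → ℕ) (σ : List (V × ℕ)) : Prop :=
  ∀ τ : List (V × ℕ), τ <+: σ → ProperOn G S (applySeq φ τ)

/-- A sequence of recolorings is once-only if each vertex is recolored at most once. -/
def OnceOnly {V : Type*} (σ : List (V × ℕ)) : Prop := (σ.map Prod.fst).Nodup

/-- All recolorings of `σ` happen at vertices of `S`. -/
def SeqIn {V : Type*} (S : Finset V) (σ : List (V × ℕ)) : Prop := ∀ p ∈ σ, p.1 ∈ S

/-- `(σ1, σ2)` is a witness that `(φ0, φ1, φ2)` is an `(L1, L2)`-trajectory in the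
subgraph of `G` induced on `S`: `φ0` is a proper coloring of `G[S]`, and for
`i ∈ {1,2}`, `φ i` is an `L i`-coloring of `G[S]` obtained from `φ (i-1)` by the
proper once-only sequence of recolorings `σ i`. -/
def WitnessOn {V : Type*} [DecidableEq V] (G : SimpleGraph V) (S : Finset V)
    (L1 L2 : V → Finset ℕ) (φ0 φ1 φ2 : V → ℕ) (σ1 σ2 : List (V × ℕ)) : Prop :=
  ProperOn G S φ0 ∧
  SeqIn S σ1 ∧ OnceOnly σ1 ∧ ProperSeqOn G S φ0 σ1 ∧ applySeq φ0 σ1 = φ1 ∧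
    (∀ v ∈ S, φ1 v ∈ L1 v) ∧
  SeqIn S σ2 ∧ OnceOnly σ2 ∧ ProperSeqOn G S φ1 σ2 ∧ applySeq φ1 σ2 = φ2 ∧
    (∀ v ∈ S, φ2 v ∈ L2 v)

/-- `(φ0, φ1, φ2)` is an `(L1, L2)`-trajectory in `G[S]` (starting with `φ0`). -/
def TrajectoryOn {V : Type*} [DecidableEq V] (G : SimpleGraph V) (S : Finset V)
    (L1 L2 : V → Finset ℕ) (φ0 φ1 φ2 : V → ℕ) : Prop :=
  ∃ σ1 σ2 : List (V × ℕ), WitnessOn G S L1 L2 φ0 φ1 φ2 σ1 σ2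

/-- `σ^T`: the subsequence of `σ` consisting of the recolorings of vertices of `T`. -/
def subSeq {V : Type*} [DecidableEq V] (T : Finset V) (σ : List (V × ℕ)) :
    List (V × ℕ) :=
  σ.filter (fun p => p.1 ∈ T)

/-- `σ` is `T`-late: the recolorings of vertices of `T` appear after all the other
recolorings, i.e. `σ = σ^{complement of T} ++ σ^T`. -/
def LateFor {V : Type*} [DecidableEq V] (T : Finset V) (σ : List (V × ℕ)) : Prop :=
  σ = σ.filter (fun p => p.1 ∉ T) ++ subSeq T σ

/-- `(σ1, σ2)` witnesses that the `(L1, L2)`-trajectory `(δ0, δ1, δ2)` in `G[T]` lifts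
to the `(L1, L2)`-trajectory `(φ0, φ1, φ2)` in `G[S]`: each `δ i` is the restriction of
`φ i` to `T`, and each `σ i` is a proper once-only `T`-late sequence of recolorings from
`φ (i-1)` to `φ i`. -/
def LiftWitness {V : Type*} [DecidableEq V] (G : SimpleGraph V) (S T : Finset V)
    (L1 L2 : V → Finset ℕ) (δ0 δ1 δ2 φ0 φ1 φ2 : V → ℕ)
    (σ1 σ2 : List (V × ℕ)) : Prop :=
  (∀ v ∈ T, φ0 v = δ0 v) ∧ (∀ v ∈ T, φ1 v = δ1 v) ∧ (∀ v ∈ T, φ2 v = δ2 v) ∧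
  WitnessOn G S L1 L2 φ0 φ1 φ2 σ1 σ2 ∧ LateFor T σ1 ∧ LateFor T σ2

/-- The `(L1, L2)`-trajectory `(δ0, δ1, δ2)` in `G[T]` lifts to the `(L1, L2)`-trajectory
`(φ0, φ1, φ2)` in `G[S]`. -/
def LiftsTo {V : Type*} [DecidableEq V] (G : SimpleGraph V) (S T : Finset V)
    (L1 L2 : V → Finset ℕ) (δ0 δ1 δ2 φ0 φ1 φ2 : V → ℕ) : Prop :=
  ∃ σ1 σ2 : List (V × ℕ), LiftWitness G S T L1 L2 δ0 δ1 δ2 φ0 φ1 φ2 σ1 σ2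


lemma applySeq_append {V : Type*} [DecidableEq V] (φ : V → ℕ) (a b : List (V × ℕ)) :
    applySeq φ (a ++ b) = applySeq (applySeq φ a) b :=
  List.foldl_append

lemma applySeq_congr {V : Type*} [DecidableEq V] {φ ψ : V → ℕ} (σ : List (V × ℕ)) (v : V)
    (h : φ v = ψ v) : applySeq φ σ v = applySeq ψ σ v := by
  induction σ generalizing φ ψ with
  | nil => exact h
  | cons p σ ih =>
    refine ih ?_
    simp only [Function.update_apply]
    split <;> simp [h]

lemma applySeq_not_mem {V : Type*} [DecidableEq V] (φ : V → ℕ) (σ : List (V × ℕ)) (v : V)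
    (h : v ∉ σ.map Prod.fst) : applySeq φ σ v = φ v := by
  induction σ generalizing φ with
  | nil => rfl
  | cons p σ ih =>
    simp only [List.map_cons, List.mem_cons, not_or] at h
    show applySeq (Function.update φ p.1 p.2) σ v = φ v
    rw [ih _ h.2]
    exact Function.update_of_ne h.1 _ _

lemma applySeq_prefix_mem {V : Type*} [DecidableEq V] (φ : V → ℕ) {τ σ : List (V × ℕ)}
    (h : τ <+: σ) (ho : OnceOnly σ) (v : V) (hv : v ∈ τ.map Prod.fst) :
    applySeq φ τ v = applySeq φ σ v := by
  obtain ⟨rest, rfl⟩ := h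
  rw [applySeq_append]
  refine (applySeq_not_mem _ _ _ ?_).symm
  intro hr
  unfold OnceOnly at ho
  rw [List.map_append, List.nodup_append] at ho
  exact ho.2.2 v hv v hr rfl

/-- The key single-stage lemma. -/
lemma stage_lemma {V : Type*} [DecidableEq V] [Fintype V] (G : SimpleGraph V) (T : Finset V)
    (δa δb φa φb : V → ℕ) (σ τ : List (V × ℕ))
    (h0 : ∀ v ∈ T, φa v = δa v) (h1 : ∀ v ∈ T, φb v = δb v)
    (hσin : SeqIn T σ) (hσo : OnceOnly σ) (hσp : ProperSeqOn G T δa σ)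
    (hσap : applySeq δa σ = δb)
    (hτin : SeqIn Finset.univ τ) (hτo : OnceOnly τ)
    (hτp : ProperSeqOn G Finset.univ φa τ)
    (hτap : applySeq φa τ = φb) (hτlate : LateFor T τ) :
    SeqIn Finset.univ (τ.filter (fun p => p.1 ∉ T) ++ σ) ∧
    OnceOnly (τ.filter (fun p => p.1 ∉ T) ++ σ) ∧
    ProperSeqOn G Finset.univ φa (τ.filter (fun p => p.1 ∉ T) ++ σ) ∧
    applySeq φa (τ.filter (fun p => p.1 ∉ T) ++ σ) = φb ∧
    LateFor T (τ.filter (fun p => p.1 ∉ T) ++ σ) ∧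
    subSeq T (τ.filter (fun p => p.1 ∉ T) ++ σ) = σ := by
  set ρ : List (V × ℕ) := τ.filter (fun p => p.1 ∉ T) with hρ
  have hρnT : ∀ p ∈ ρ, p.1 ∉ T := by
    intro p hp
    have := List.of_mem_filter hp
    simpa using this
  have hρpre : ρ <+: τ := ⟨subSeq T τ, hτlate.symm⟩
  set ψ : V → ℕ := applySeq φa ρ with hψ
  -- ψ agrees with δa on T
  have hψT : ∀ v ∈ T, ψ v = δa v := by
    intro v hv
    rw [hψ, applySeq_not_mem, h0 v hv]
    intro hmem
    obtain ⟨p, hp, hp1⟩ := List.mem_map.mp hmem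
    exact hρnT p hp (hp1 ▸ hv)
  -- ψ agrees with φb off T
  have hψnT : ∀ v ∉ T, ψ v = φb v := by
    intro v hv
    have h := hτap
    rw [hτlate, applySeq_append] at h
    rw [← h]
    refine (applySeq_not_mem _ _ _ ?_).symm
    intro hmem
    obtain ⟨p, hp, hp1⟩ := List.mem_map.mp hmem
    have := List.of_mem_filter hp
    exact hv (hp1 ▸ (by simpa using this))
  -- applySeq result
  have happ : applySeq φa (ρ ++ σ) = φb := by
    funext v
    rw [applySeq_append, ← hψ]
    by_cases hv : v ∈ T
    · rw [applySeq_congr σ v (hψT v hv), hσap, h1 v hv]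
    · rw [applySeq_not_mem, hψnT v hv]
      intro hmem
      obtain ⟨p, hp, hp1⟩ := List.mem_map.mp hmem
      exact hv (hp1 ▸ hσin p hp)
  refine ⟨?_, ?_, ?_, happ, ?_, ?_⟩
  · intro p _; exact Finset.mem_univ _
  · -- OnceOnly
    unfold OnceOnly
    rw [List.map_append, List.nodup_append]
    refine ⟨(hτo).sublist (List.Sublist.map _ List.filter_sublist), hσo, ?_⟩
    intro a ha b hb hab
    subst hab
    obtain ⟨p, hp, hp1⟩ := List.mem_map.mp ha
    obtain ⟨q, hq, hq1⟩ := List.mem_map.mp hb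
    exact hρnT p hp (hp1 ▸ hq1 ▸ hσin q hq)
  · -- ProperSeqOn
    intro κ hκ
    obtain ⟨rest, hrest⟩ := hκ
    rcases List.append_eq_append_iff.mp hrest with ⟨a', ha', _⟩ | ⟨c', hc', hrst⟩
    · -- κ <+: ρ
      have hκρ : κ <+: ρ := ⟨a', ha'.symm⟩
      exact hτp κ (hκρ.trans hρpre)
    · -- κ = ρ ++ κ' with κ' <+: σ
      have hκ' : c' <+: σ := ⟨rest, hrst.symm⟩
      rw [hc', applySeq_append, ← hψ]
      set χ : V → ℕ := applySeq ψ c' with hχ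
      -- off T, χ = ψ = φb
      have hχnT : ∀ v ∉ T, χ v = ψ v := by
        intro v hv
        refine applySeq_not_mem _ _ _ ?_
        intro hmem
        obtain ⟨p, hp, hp1⟩ := List.mem_map.mp hmem
        exact hv (hp1 ▸ hσin p (hκ'.subset hp))
      -- on T, χ agrees with applySeq δa c'
      have hχT : ∀ v ∈ T, χ v = applySeq δa c' v := fun v hv =>
        applySeq_congr c' v (hψT v hv)
      have hψprop : ProperOn G Finset.univ ψ := hτp ρ hρpre
      have hφbprop : ProperOn G Finset.univ φb := by
        have := hτp τ (List.prefix_refl τ)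
        rwa [hτap] at this
      have hmid : ∀ v ∈ T, χ v = ψ v ∨ χ v = φb v := by
        intro v hv
        by_cases hm : v ∈ c'.map Prod.fst
        · right
          rw [hχT v hv, applySeq_prefix_mem δa hκ' hσo v hm, hσap, h1 v hv]
        · left
          exact applySeq_not_mem _ _ _ hm
      intro u _ v _ hadj heq
      by_cases hu : u ∈ T <;> by_cases hv : v ∈ T
      · -- both in T : use properness of σ stage
        have := hσp c' hκ' u hu v hv hadj
        rw [← hχT u hu, ← hχT v hv] at this
        exact this heq
      · have hχu : χ u = ψ u ∨ χ u = φb u := hmid u hu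
        have hχv : χ v = ψ v := hχnT v hv
        have hχv' : χ v = φb v := by rw [hχv, hψnT v hv]
        rcases hχu with h | h
        · exact hψprop u (Finset.mem_univ u) v (Finset.mem_univ v) hadj (h ▸ hχv ▸ heq)
        · exact hφbprop u (Finset.mem_univ u) v (Finset.mem_univ v) hadj (h ▸ hχv' ▸ heq)
      · have hχv : χ v = ψ v ∨ χ v = φb v := hmid v hv
        have hχu : χ u = ψ u := hχnT u hu
        have hχu' : χ u = φb u := by rw [hχu, hψnT u hu]
        rcases hχv with h | h
        · exact hψprop u (Finset.mem_univ u) v (Finset.mem_univ v) hadj (hχu ▸ h ▸ heq)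
        · exact hφbprop u (Finset.mem_univ u) v (Finset.mem_univ v) hadj (hχu' ▸ h ▸ heq)
      · have hχu : χ u = ψ u := hχnT u hu
        have hχv : χ v = ψ v := hχnT v hv
        exact hψprop u (Finset.mem_univ u) v (Finset.mem_univ v) hadj (hχu ▸ hχv ▸ heq)
  · -- LateFor
    unfold LateFor subSeq
    rw [List.filter_append, List.filter_append]
    have e1 : ρ.filter (fun p => p.1 ∉ T) = ρ := by
      refine List.filter_eq_self.mpr ?_
      intro p hp; simpa using hρnT p hp
    have e2 : σ.filter (fun p => p.1 ∉ T) = [] := by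
      refine List.filter_eq_nil_iff.mpr ?_
      intro p hp; simpa using hσin p hp
    have e3 : ρ.filter (fun p => p.1 ∈ T) = [] := by
      refine List.filter_eq_nil_iff.mpr ?_
      intro p hp; simpa using hρnT p hp
    have e4 : σ.filter (fun p => p.1 ∈ T) = σ := by
      refine List.filter_eq_self.mpr ?_
      intro p hp; simpa using hσin p hp
    rw [e1, e2, e3, e4]; simp
  · -- subSeq
    unfold subSeq
    rw [List.filter_append]
    have e3 : ρ.filter (fun p => p.1 ∈ T) = [] := by
      refine List.filter_eq_nil_iff.mpr ?_
      intro p hp; simpa using hρnT p hp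
    have e4 : σ.filter (fun p => p.1 ∈ T) = σ := by
      refine List.filter_eq_self.mpr ?_
      intro p hp; simpa using hσin p hp
    rw [e3, e4]; simp

/-- Observation 1 (reordering): Let `H = G[T]` be an induced subgraph of `G` and let
`(σ1, σ2)` witness the `(L1, L2)`-trajectory `(δ0, δ1, δ2)` in `H`.  If `(δ0, δ1, δ2)`
lifts to an `(L1, L2)`-trajectory `(φ0, φ1, φ2)` in `G`, then this lifting is witnessed
by a pair `(π1, π2)` such that `π1^H = σ1` and `π2^H = σ2`. -/
theorem lift_witness_reorder {V : Type*} [DecidableEq V] [Fintype V]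
    (G : SimpleGraph V) (T : Finset V) (L1 L2 : V → Finset ℕ)
    (δ0 δ1 δ2 φ0 φ1 φ2 : V → ℕ) (σ1 σ2 : List (V × ℕ))
    (hδ : WitnessOn G T L1 L2 δ0 δ1 δ2 σ1 σ2)
    (hlift : LiftsTo G Finset.univ T L1 L2 δ0 δ1 δ2 φ0 φ1 φ2) :
    ∃ π1 π2 : List (V × ℕ),
      LiftWitness G Finset.univ T L1 L2 δ0 δ1 δ2 φ0 φ1 φ2 π1 π2 ∧
      subSeq T π1 = σ1 ∧ subSeq T π2 = σ2 := by
  obtain ⟨τ1, τ2, h0, h1, h2, hW, hl1, hl2⟩ := hlift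
  obtain ⟨hδprop, hσ1in, hσ1o, hσ1p, hσ1ap, hδ1L, hσ2in, hσ2o, hσ2p, hσ2ap, hδ2L⟩ := hδ
  obtain ⟨hφprop, hτ1in, hτ1o, hτ1p, hτ1ap, hφ1L, hτ2in, hτ2o, hτ2p, hτ2ap, hφ2L⟩ := hW
  obtain ⟨hin1, ho1, hp1, hap1, hlate1, hsub1⟩ :=
    stage_lemma G T δ0 δ1 φ0 φ1 σ1 τ1 h0 h1 hσ1in hσ1o hσ1p hσ1ap hτ1in hτ1o hτ1p hτ1ap hl1
  obtain ⟨hin2, ho2, hp2, hap2, hlate2, hsub2⟩ :=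
    stage_lemma G T δ1 δ2 φ1 φ2 σ2 τ2 h1 h2 hσ2in hσ2o hσ2p hσ2ap hτ2in hτ2o hτ2p hτ2ap hl2
  exact ⟨_, _, ⟨h0, h1, h2,
    ⟨hφprop, hin1, ho1, hp1, hap1, hφ1L, hin2, ho2, hp2, hap2, hφ2L⟩,
    hlate1, hlate2⟩, hsub1, hsub2⟩
end

section
/- Let d ≥ 1 be an integer. Every d-degenerate graph G contains an independent set I such that the induced subgraph G−I is (d−1)-degenerate. -/
/-- The subgraph of `G` induced on the vertex set `S` is `d`-degenerate: every
nonempty subset `T` of `S` contains a vertex with at most `d` neighbors inside `T`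
(equivalently, every subgraph of `G[S]` contains a vertex of degree at most `d`). -/
def DegenerateOn {V : Type*} [DecidableEq V] (G : SimpleGraph V) [DecidableRel G.Adj]
    (S : Finset V) (d : ℕ) : Prop :=
  ∀ T : Finset V, T ⊆ S → T.Nonempty → ∃ v ∈ T, (T.filter (fun u => G.Adj v u)).card ≤ d

lemma exists_independent_aux {V : Type*} [DecidableEq V]
    (G : SimpleGraph V) [DecidableRel G.Adj] (d : ℕ) :
    ∀ S : Finset V, DegenerateOn G S d →
      ∃ I : Finset V, I ⊆ S ∧ (∀ u ∈ I, ∀ v ∈ I, ¬ G.Adj u v) ∧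
        ∀ T : Finset V, T ⊆ S \ I → T.Nonempty →
          ∃ v ∈ T, (T.filter (fun u => G.Adj v u)).card ≤ d - 1 := by
  intro S
  induction S using Finset.strongInduction with
  | _ S ih =>
    intro hdeg
    rcases S.eq_empty_or_nonempty with rfl | hS
    · exact ⟨∅, by simp, by simp, fun T hT hTne => absurd (Finset.subset_empty.mp (by simpa using hT)) (Finset.nonempty_iff_ne_empty.mp hTne)⟩
    · obtain ⟨v, hvS, hvdeg⟩ := hdeg S le_rfl hS
      have hss : S.erase v ⊂ S := Finset.erase_ssubset hvS
      have hdeg' : DegenerateOn G (S.erase v) d := fun T hT hTne =>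
        hdeg T (hT.trans (Finset.erase_subset _ _)) hTne
      obtain ⟨I, hIsub, hIind, hIdeg⟩ := ih _ hss hdeg'
      by_cases hnb : ∃ u ∈ I, G.Adj v u
      · -- v has a neighbor in I; keep I
        obtain ⟨u, huI, hadj⟩ := hnb
        refine ⟨I, hIsub.trans (Finset.erase_subset _ _), hIind, ?_⟩
        intro T hT hTne
        by_cases hvT : v ∈ T
        · refine ⟨v, hvT, ?_⟩
          have huT : u ∉ T := fun huT => (Finset.mem_sdiff.mp (hT huT)).2 huI
          have hsub : T.filter (fun u => G.Adj v u) ⊆ (S.filter (fun u => G.Adj v u)).erase u := by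
            intro x hx
            rw [Finset.mem_filter] at hx
            refine Finset.mem_erase.mpr ⟨fun h => huT (h ▸ hx.1), ?_⟩
            exact Finset.mem_filter.mpr ⟨(Finset.mem_sdiff.mp (hT hx.1)).1, hx.2⟩
          have huf : u ∈ S.filter (fun u => G.Adj v u) :=
            Finset.mem_filter.mpr ⟨(Finset.erase_subset _ _) (hIsub huI), hadj⟩
          calc (T.filter (fun u => G.Adj v u)).card
              ≤ ((S.filter (fun u => G.Adj v u)).erase u).card := Finset.card_le_card hsub
            _ = (S.filter (fun u => G.Adj v u)).card - 1 := Finset.card_erase_of_mem huf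
            _ ≤ d - 1 := Nat.sub_le_sub_right hvdeg 1
        · refine hIdeg T ?_ hTne
          intro x hx
          have := Finset.mem_sdiff.mp (hT hx)
          exact Finset.mem_sdiff.mpr ⟨Finset.mem_erase.mpr ⟨fun h => hvT (h ▸ hx), this.1⟩, this.2⟩
      · -- v has no neighbor in I; add v to I
        push_neg at hnb
        refine ⟨insert v I, ?_, ?_, ?_⟩
        · exact Finset.insert_subset hvS (hIsub.trans (Finset.erase_subset _ _))
        · intro a ha b hb hab
          rcases Finset.mem_insert.mp ha with rfl | ha'
          · rcases Finset.mem_insert.mp hb with rfl | hb'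
            · exact G.irrefl hab
            · exact hnb b hb' hab
          · rcases Finset.mem_insert.mp hb with rfl | hb'
            · exact hnb a ha' hab.symm
            · exact hIind a ha' b hb' hab
        · intro T hT hTne
          refine hIdeg T ?_ hTne
          intro x hx
          have h := Finset.mem_sdiff.mp (hT hx)
          have hni := Finset.mem_insert.not.mp h.2
          push_neg at hni
          exact Finset.mem_sdiff.mpr ⟨Finset.mem_erase.mpr ⟨hni.1, h.1⟩, hni.2⟩

/-- Thomassen: for `d ≥ 1`, every `d`-degenerate graph `G` contains an independent set
`I` such that `G - I` is `(d-1)`-degenerate. -/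
theorem exists_independent_set_degenerate {V : Type*} [Fintype V] [DecidableEq V]
    (G : SimpleGraph V) [DecidableRel G.Adj] (d : ℕ) (hd : 1 ≤ d)
    (hdeg : DegenerateOn G Finset.univ d) :
    ∃ I : Finset V, (∀ u ∈ I, ∀ v ∈ I, ¬ G.Adj u v) ∧ DegenerateOn G Iᶜ (d - 1) := by
  obtain ⟨I, hIsub, hIind, hIdeg⟩ := exists_independent_aux G d Finset.univ hdeg
  refine ⟨I, hIind, fun T hT hTne => hIdeg T ?_ hTne⟩
  intro x hx
  have := hT hx
  simp only [Finset.mem_compl] at this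
  exact Finset.mem_sdiff.mpr ⟨Finset.mem_univ x, this⟩
end
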